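/- The Kullback–Leibler divergence from Weibull(k, λ) to Gamma(α, β) equals (γα)/k - α·ln λ + ln k + β·λ·Γ(1 + 1/k) - γ - 1 - α·ln β + ln Γ(α), where γ is the Euler–Mascheroni constant. -/

import Mathlib

/-!
The substitution `x = λ u ^ (1/k)` carries the Weibull density to the standard exponential
density `e^{-u}`, and turns the log-likelihood ratio into an affine combination of `1`, `log u`,
`u` and `u ^ (1/k)`. Against `e^{-u}` these integrate to `1`, `Γ'(1) = -γ`, `Γ(2) = 1` and
`Γ(1 + 1/k)`.
-/

open MeasureTheory Set

/-- Weibull density with shape k and scale λ. -/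
noncomputable def weibullPDF (k lam x : ℝ) : ℝ :=
  (k / lam) * (x / lam) ^ (k - 1) * Real.exp (-(x / lam) ^ k)

/-- Gamma density with shape α and rate β. -/
noncomputable def gammaPDF' (α β x : ℝ) : ℝ :=
  β ^ α * x ^ (α - 1) * Real.exp (-β * x) / Real.Gamma α

open Real

local notation "γ" => eulerMascheroniConstant

theorem integral_log_mul_exp_neg : ∫ t in Ioi (0 : ℝ), log t * exp (-t) = -γ := by
  have hGamma : HasDerivAt Complex.Gamma
      (∫ t : ℝ in Ioi 0, (t : ℂ) ^ ((1 : ℂ) - 1) * (log t * exp (-t))) 1 := by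
    refine (Complex.hasDerivAt_GammaIntegral one_pos).congr_of_eventuallyEq ?_
    filter_upwards [(Complex.continuous_re.isOpen_preimage _ isOpen_Ioi).mem_nhds
      (show (1 : ℂ) ∈ Complex.re ⁻¹' Ioi 0 by simp)] with s hs
    exact Complex.Gamma_eq_integral hs
  have h := hGamma.unique Complex.hasDerivAt_Gamma_one
  simp only [sub_self, Complex.cpow_zero, one_mul, ← Complex.ofReal_mul, integral_complex_ofReal]
    at h
  exact_mod_cast h

-- A non-integrable function has Bochner integral `0`, and `-γ ≠ 0`.
theorem integrableOn_log_mul_exp_neg :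
    IntegrableOn (fun t => log t * exp (-t)) (Ioi (0 : ℝ)) :=
  Integrable.of_integral_ne_zero <| by
    rw [integral_log_mul_exp_neg, neg_ne_zero]
    exact (one_half_pos.trans one_half_lt_eulerMascheroniConstant).ne'

theorem integrableOn_exp_neg_mul_rpow {s : ℝ} (hs : -1 < s) :
    IntegrableOn (fun u => exp (-u) * u ^ s) (Ioi (0 : ℝ)) := by
  simpa using GammaIntegral_convergent (s := 1 + s) (by linarith)

theorem integral_exp_neg_mul_rpow_eq_Gamma {s : ℝ} (hs : -1 < s) :
    ∫ u in Ioi (0 : ℝ), exp (-u) * u ^ s = Gamma (1 + s) := by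
  simp [Gamma_eq_integral (s := 1 + s) (by linarith)]

theorem integral_exp_neg_mul_const_add_log_add_rpow (a b c d : ℝ) {s : ℝ} (hs : -1 < s) :
    ∫ u in Ioi (0 : ℝ), exp (-u) * (a + b * log u + c * u + d * u ^ s)
      = a - b * γ + c + d * Gamma (1 + s) := by
  have hexp : IntegrableOn (fun u => exp (-u)) (Ioi (0 : ℝ)) := by
    simpa using integrableOn_exp_neg_mul_rpow (s := 0) (by norm_num)
  have hid : IntegrableOn (fun u => exp (-u) * u) (Ioi (0 : ℝ)) := by
    simpa using integrableOn_exp_neg_mul_rpow (s := 1) (by norm_num)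
  have hid' : ∫ u in Ioi (0 : ℝ), exp (-u) * u = 1 := by
    simpa [one_add_one_eq_two] using integral_exp_neg_mul_rpow_eq_Gamma (s := 1) (by norm_num)
  have h1 := hexp.const_mul a
  have h2 := integrableOn_log_mul_exp_neg.const_mul b
  have h3 := hid.const_mul c
  have h4 := (integrableOn_exp_neg_mul_rpow hs).const_mul d
  calc ∫ u in Ioi (0 : ℝ), exp (-u) * (a + b * log u + c * u + d * u ^ s)
      = ∫ u in Ioi (0 : ℝ), a * exp (-u) + b * (log u * exp (-u)) + c * (exp (-u) * u)
          + d * (exp (-u) * u ^ s) := by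
        congr 1; ext u; ring
    _ = a - b * γ + c + d * Gamma (1 + s) := by
        rw [integral_add (by exact (h1.add h2).add h3) h4, integral_add (by exact h1.add h2) h3,
          integral_add h1 h2, integral_const_mul, integral_const_mul, integral_const_mul,
          integral_const_mul, integral_exp_neg_Ioi_zero, integral_log_mul_exp_neg, hid',
          integral_exp_neg_mul_rpow_eq_Gamma hs]
        ring

theorem integral_weibullPDF_mul {k lam : ℝ} (hk : 0 < k) (hlam : 0 < lam) (g : ℝ → ℝ) :
    ∫ x in Ioi 0, weibullPDF k lam x * g x = ∫ u in Ioi 0, exp (-u) * g (lam * u ^ (1 / k)) :=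
  calc ∫ x in Ioi 0, weibullPDF k lam x * g x
      = lam * ∫ x in Ioi 0, weibullPDF k lam (lam * x) * g (lam * x) := by
        rw [← smul_eq_mul, integral_comp_mul_left_Ioi' (fun x => weibullPDF k lam x * g x) 0 hlam,
          mul_zero]
    _ = ∫ x in Ioi 0, (k * x ^ (k - 1)) • (exp (-x ^ k) * g (lam * (x ^ k) ^ (1 / k))) := by
        rw [← integral_const_mul]
        refine setIntegral_congr_fun measurableSet_Ioi fun x (hx : 0 < x) => ?_
        rw [← rpow_mul hx.le, mul_one_div_cancel hk.ne', rpow_one, weibullPDF,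
          mul_div_cancel_left₀ _ hlam.ne', smul_eq_mul]
        field_simp
    _ = ∫ u in Ioi 0, exp (-u) * g (lam * u ^ (1 / k)) :=
        integral_comp_rpow_Ioi_of_pos (g := fun u => exp (-u) * g (lam * u ^ (1 / k))) hk

theorem log_weibullPDF {k lam x : ℝ} (hk : k ≠ 0) (hlam : 0 < lam) (hx : 0 < x) :
    log (weibullPDF k lam x) = log k - k * log lam + (k - 1) * log x - (x / lam) ^ k := by
  rw [weibullPDF, log_mul (by positivity) (exp_pos _).ne', log_mul (by positivity)
    (rpow_pos_of_pos (div_pos hx hlam) _).ne', log_exp, log_rpow (div_pos hx hlam),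
    log_div hk hlam.ne', log_div hx.ne' hlam.ne']
  ring

theorem log_gammaPDF' {α β x : ℝ} (hα : 0 < α) (hβ : 0 < β) (hx : 0 < x) :
    log (gammaPDF' α β x) = α * log β + (α - 1) * log x - β * x - log (Gamma α) := by
  rw [gammaPDF', log_div (by positivity) (Gamma_pos_of_pos hα).ne',
    log_mul (by positivity) (exp_pos _).ne', log_mul (by positivity) (by positivity), log_exp,
    log_rpow hβ, log_rpow hx]
  ring

/-- KL(Weibull(k,λ) ‖ Gamma(α,β)) =
γα/k - α ln λ + ln k + βλΓ(1+1/k) - γ - 1 - α ln β + ln Γ(α). -/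
theorem stmt_5 (k lam α β : ℝ) (hk : 0 < k) (hlam : 0 < lam) (hα : 0 < α) (hβ : 0 < β) :
    ∫ x in Ioi (0:ℝ), weibullPDF k lam x * Real.log (weibullPDF k lam x / gammaPDF' α β x)
      = Real.eulerMascheroniConstant * α / k - α * Real.log lam + Real.log k
        + β * lam * Real.Gamma (1 + 1 / k) - Real.eulerMascheroniConstant - 1
        - α * Real.log β + Real.log (Real.Gamma α) := by
  have hlog : ∀ u ∈ Ioi (0 : ℝ),
      exp (-u) * log (weibullPDF k lam (lam * u ^ (1 / k)) / gammaPDF' α β (lam * u ^ (1 / k)))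
        = exp (-u) * ((log k - α * log lam - α * log β + log (Gamma α))
          + (1 - α / k) * log u + (-1) * u + (β * lam) * u ^ (1 / k)) := by
    intro u (hu : 0 < u)
    have hx : 0 < lam * u ^ (1 / k) := by positivity
    have hw : weibullPDF k lam (lam * u ^ (1 / k)) ≠ 0 := by unfold weibullPDF; positivity
    have hq : gammaPDF' α β (lam * u ^ (1 / k)) ≠ 0 := by
      have := Gamma_pos_of_pos hα; unfold gammaPDF'; positivity
    rw [log_div hw hq, log_weibullPDF hk.ne' hlam hx, log_gammaPDF' hα hβ hx,
      log_mul hlam.ne' (by positivity), log_rpow hu, mul_div_cancel_left₀ _ hlam.ne',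
      ← rpow_mul hu.le, one_div_mul_cancel hk.ne', rpow_one]
    field_simp
    ring
  rw [integral_weibullPDF_mul hk hlam, setIntegral_congr_fun measurableSet_Ioi hlog,
    integral_exp_neg_mul_const_add_log_add_rpow _ _ _ _ (by linarith [one_div_pos.2 hk])]
  field_simp
  ring
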